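/- Let k be a field, Q a finite quiver without oriented cycles, and I ⊆ (kQ)_{≥2} a two-sided ideal of the path algebra kQ. Let Stab_I denote the subgroup of the group Aut(kQ/k^{Q₀}) of k^{Q₀}-algebra automorphisms of kQ consisting of those g with g(I) = I. Then the natural group homomorphism Stab_I → Aut((kQ/I)/k^{Q₀}) to the group of k^{Q₀}-algebra automorphisms of kQ/I, induced by passing to the quotient, is surjective; its kernel consists exactly of those g ∈ Stab_I such that g(a) − a ∈ I for every arrow a ∈ Q₁, and this kernel is in natural bijection with ∏_{i,j∈Q₀, i≠j} Hom_k(V_{ij}^{prim}, e_i I e_j) via g ↦ (a ↦ g(a) − a). In other words, there is a short exact sequence of groups 1 → ∏_{i≠j} Hom_k(V_{ij}^{prim}, e_i I e_j) → Stab_I → Aut((kQ/I)/k^{Q₀}) → 1. -/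

import Mathlib

/-! An algebra endomorphism of `kQ` fixing the idempotents `e_i` is determined by the images
of the arrows, and these can be prescribed freely as long as the image of an arrow `a : i → j`
lies in `e_j (kQ) e_i`. If every arrow is moved only by an element of `(kQ)_{≥2}`, then `g - 1`
raises the path-length filtration, which is finite because `Q` has no oriented cycles; hence
`g - 1` is nilpotent and `g` is an automorphism. An automorphism `h` of `kQ/I` and its inverse
lift arrow by arrow to endomorphisms `G`, `G'` of `kQ`; both composites induce the identity on
`kQ/I`, so they move arrows by elements of `I ⊆ (kQ)_{≥2}`, and `G` is an automorphism. The
kernel consists of the automorphisms `a ↦ a + φ(a)` with `φ(a) ∈ e_j I e_i`, which exist and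
are unique by the same two facts. -/

/-- A finite quiver on a vertex set `V`: a family of finite types of arrows `Arrow i j`
from `i` to `j`. -/
structure FinQuiver (V : Type) where
  Arrow : V → V → Type
  [fintypeArrow : ∀ i j, Fintype (Arrow i j)]

attribute [instance] FinQuiver.fintypeArrow

/-- Paths in a finite quiver: `QPath Q i j` is the type of paths from `i` to `j`. -/
inductive QPath {V : Type} (Q : FinQuiver V) : V → V → Type
  | nil (i : V) : QPath Q i i
  | cons {i j l : V} (p : QPath Q i j) (a : Q.Arrow j l) : QPath Q i l

namespace QPath

variable {V : Type} {Q : FinQuiver V}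

/-- The length (number of arrows) of a path. -/
def length : ∀ {i j : V}, QPath Q i j → ℕ
  | _, _, nil _ => 0
  | _, _, cons p _ => length p + 1

/-- Concatenation of paths. -/
def comp : ∀ {i j l : V}, QPath Q i j → QPath Q j l → QPath Q i l
  | _, _, _, p, nil _ => p
  | _, _, _, p, cons q a => cons (comp p q) a

/-- Transport a path along equalities of its endpoints. -/
def cast {i j i' j' : V} (hi : i = i') (hj : j = j') (p : QPath Q i j) : QPath Q i' j' := by
  subst hi; subst hj; exact p

end QPath

/-- The quiver `Q` has no oriented cycles: every path from a vertex to itself has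
length zero. -/
def FinQuiver.NoCycles {V : Type} (Q : FinQuiver V) : Prop :=
  ∀ (i : V) (p : QPath Q i i), p.length = 0

/-- A realization of the `k`-algebra `A` as the path algebra of the quiver `Q`:
a `k`-basis indexed by the paths of `Q`, such that basis vectors multiply by
concatenation of composable paths (and give `0` for non-composable paths), and such
that the sum of the length-zero paths is `1`.  The basis vector of a path lying in
`e_i (kQ) e_j` is indexed by the corresponding path from `j` to `i`. -/
structure PathAlgStructure (k : Type) [CommRing k] {V : Type} [Fintype V] [DecidableEq V]
    (Q : FinQuiver V) (A : Type) [Ring A] [Algebra k A] where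
  basis : Module.Basis (Σ i : V, Σ j : V, QPath Q i j) k A
  basis_mul : ∀ {a b c d : V} (p : QPath Q a b) (q : QPath Q c d),
    basis ⟨c, d, q⟩ * basis ⟨a, b, p⟩ =
      if h : b = c then basis ⟨a, d, p.comp (q.cast h.symm rfl)⟩ else 0
  one_def : (1 : A) = ∑ i : V, basis ⟨i, i, QPath.nil i⟩

namespace PathAlgStructure

variable {k : Type} [CommRing k] {V : Type} [Fintype V] [DecidableEq V]
  {Q : FinQuiver V} {A : Type} [Ring A] [Algebra k A]

/-- The idempotent `e_i` of the path algebra: the length-zero path at the vertex `i`. -/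
noncomputable def idem (ps : PathAlgStructure k Q A) (i : V) : A :=
  ps.basis ⟨i, i, QPath.nil i⟩

/-- `(kQ)_{≥ n}`: the span of the paths of length at least `n`. -/
def degreeGE (ps : PathAlgStructure k Q A) (n : ℕ) : Submodule k A :=
  Submodule.span k {x | ∃ (i j : V) (p : QPath Q i j), n ≤ p.length ∧ x = ps.basis ⟨i, j, p⟩}

/-- `e_i (kQ) e_j`: the span of the paths from `j` to `i`. -/
def pathSpan (ps : PathAlgStructure k Q A) (i j : V) : Submodule k A :=
  Submodule.span k {x | ∃ p : QPath Q j i, x = ps.basis ⟨j, i, p⟩}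

/-- `V_{ij}^{prim}`: the span of the arrows from `j` to `i`. -/
def arrowSpan (ps : PathAlgStructure k Q A) (i j : V) : Submodule k A :=
  Submodule.span k {x | ∃ a : Q.Arrow j i, x = ps.basis ⟨j, i, (QPath.nil j).cons a⟩}

/-- `V_{ij}^{nonprim} = e_i (kQ)_{≥2} e_j`: the span of the paths from `j` to `i`
of length at least two. -/
def nonprimSpan (ps : PathAlgStructure k Q A) (i j : V) : Submodule k A :=
  Submodule.span k {x | ∃ p : QPath Q j i, 2 ≤ p.length ∧ x = ps.basis ⟨j, i, p⟩}

end PathAlgStructure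

namespace QPath

variable {V : Type} {Q : FinQuiver V}

@[simp] theorem cast_rfl {i j : V} (p : QPath Q i j) : p.cast rfl rfl = p := rfl

@[simp] theorem length_nil (i : V) : (nil (Q := Q) i).length = 0 := by
  rw [length]

@[simp] theorem length_cons {i j l : V} (p : QPath Q i j) (a : Q.Arrow j l) :
    (p.cons a).length = p.length + 1 := by
  rw [length]

@[simp] theorem length_cast {i j i' j' : V} (hi : i = i') (hj : j = j') (p : QPath Q i j) :
    (p.cast hi hj).length = p.length := by
  subst hi hj; rfl

@[simp] theorem comp_nil {i j : V} (p : QPath Q i j) : p.comp (nil j) = p := by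
  rw [comp]

@[simp] theorem comp_cons {i j l m : V} (p : QPath Q i j) (q : QPath Q j l) (a : Q.Arrow l m) :
    p.comp (q.cons a) = (p.comp q).cons a := by
  rw [comp]

@[simp] theorem nil_comp {i j : V} (p : QPath Q i j) : (nil i).comp p = p := by
  induction p with
  | nil => exact comp_nil _
  | cons p a ih => rw [comp_cons, ih]

@[simp] theorem length_comp {i j l : V} (p : QPath Q i j) (q : QPath Q j l) :
    (p.comp q).length = p.length + q.length := by
  induction q with
  | nil => rw [comp_nil, length_nil, Nat.add_zero]
  | cons q a ih => rw [comp_cons, length_cons, length_cons, ih, Nat.add_assoc]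

def verts {i : V} : ∀ {j : V}, QPath Q i j → List V
  | _, nil _ => [i]
  | l, cons p _ => l :: verts p

@[simp] theorem length_verts {i j : V} (p : QPath Q i j) : p.verts.length = p.length + 1 := by
  induction p with
  | nil => simp [verts]
  | cons p a ih => simp [verts, ih]

theorem nonempty_of_mem_verts {i j : V} (p : QPath Q i j) {v : V} (hv : v ∈ p.verts) :
    Nonempty (QPath Q v j) := by
  induction p with
  | nil => rw [verts, List.mem_singleton] at hv; exact ⟨hv ▸ nil v⟩
  | cons p a ih =>
    rcases List.mem_cons.1 hv with rfl | hv
    · exact ⟨nil _⟩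
    · exact ⟨(ih hv).some.cons a⟩

theorem nodup_verts (hQ : Q.NoCycles) {i j : V} (p : QPath Q i j) : p.verts.Nodup := by
  induction p with
  | nil => exact List.nodup_singleton _
  | cons p a ih =>
    refine List.nodup_cons.2 ⟨fun hl => ?_, ih⟩
    obtain ⟨q⟩ := nonempty_of_mem_verts p hl
    exact absurd (hQ _ (q.cons a)) (by simp)

theorem length_lt_card [Fintype V] (hQ : Q.NoCycles) {i j : V} (p : QPath Q i j) :
    p.length < Fintype.card V := by
  simpa using (nodup_verts hQ p).length_le_card

end QPath

theorem FinQuiver.NoCycles.ne {V : Type} {Q : FinQuiver V} (hQ : Q.NoCycles) {i j : V}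
    (a : Q.Arrow i j) : j ≠ i := by
  rintro rfl
  exact absurd (hQ j ((QPath.nil j).cons a)) (by simp)

namespace QPath

variable {V : Type} {Q : FinQuiver V} {B : Type} [Ring B] (E : V → B)
  (F : ∀ i j : V, Q.Arrow i j → B)

def eval {i : V} : ∀ {j : V}, QPath Q i j → B
  | _, nil _ => E i
  | _, cons p a => F _ _ a * eval p

variable {E F}

@[simp] theorem eval_nil (i : V) : (nil (Q := Q) i).eval E F = E i := rfl

@[simp] theorem eval_cons {i j l : V} (p : QPath Q i j) (a : Q.Arrow j l) :
    (p.cons a).eval E F = F j l a * p.eval E F := rfl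

theorem idem_mul_eval [DecidableEq V] (hE : ∀ i j, E i * E j = if i = j then E i else 0)
    (hF : ∀ i j (a : Q.Arrow i j), E j * F i j a * E i = F i j a) {i j : V} (p : QPath Q i j) :
    E j * p.eval E F = p.eval E F := by
  induction p with
  | nil => exact (hE i i).trans (if_pos rfl)
  | @cons j l p a _ =>
    have hEF : E l * F j l a = F j l a := by
      conv_lhs => rw [← hF j l a]
      rw [← mul_assoc, ← mul_assoc, hE l l, if_pos rfl, hF]
    rw [eval_cons, ← mul_assoc, hEF]

theorem eval_mul_idem [DecidableEq V] (hE : ∀ i j, E i * E j = if i = j then E i else 0)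
    {i j : V} (p : QPath Q i j) : p.eval E F * E i = p.eval E F := by
  induction p with
  | nil => exact (hE i i).trans (if_pos rfl)
  | cons p a ih => rw [eval_cons, mul_assoc, ih]

theorem eval_comp [DecidableEq V] (hE : ∀ i j, E i * E j = if i = j then E i else 0)
    (hF : ∀ i j (a : Q.Arrow i j), E j * F i j a * E i = F i j a) {i j l : V}
    (p : QPath Q i j) (q : QPath Q j l) : (p.comp q).eval E F = q.eval E F * p.eval E F := by
  induction q with
  | nil => rw [comp_nil, eval_nil, idem_mul_eval hE hF]
  | cons q a ih => rw [comp_cons, eval_cons, eval_cons, ih, mul_assoc]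

end QPath

theorem Submodule.map_algEquiv_eq_self {k A B : Type*} [CommRing k] [Ring A] [Algebra k A]
    [Ring B] [Algebra k B] {p : A →ₐ[k] B} {I : Submodule k A} (hker : ∀ x, p x = 0 ↔ x ∈ I)
    (g : A ≃ₐ[k] A) (h : B ≃ₐ[k] B) (hg : ∀ x, p (g x) = h (p x)) :
    I.map g.toLinearMap = I := by
  ext y
  rw [← AlgEquiv.toLinearEquiv_toLinearMap, Submodule.mem_map_equiv, ← hker, ← hker]
  conv_rhs => rw [← g.apply_symm_apply y, hg, map_eq_zero_iff _ h.injective]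
  rfl

namespace PathAlgStructure

variable {k : Type} [CommRing k] {V : Type} [Fintype V] [DecidableEq V]
  {Q : FinQuiver V} {A : Type} [Ring A] [Algebra k A] (ps : PathAlgStructure k Q A)

noncomputable def arrow {i j : V} (a : Q.Arrow i j) : A :=
  ps.basis ⟨i, j, (QPath.nil i).cons a⟩

theorem idem_mul_basis {i j : V} (p : QPath Q i j) (l : V) :
    ps.idem l * ps.basis ⟨i, j, p⟩ = if l = j then ps.basis ⟨i, j, p⟩ else 0 := by
  rw [idem, ps.basis_mul]
  by_cases h : l = j
  · subst h; rw [dif_pos rfl, if_pos rfl, QPath.cast_rfl, QPath.comp_nil]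
  · rw [dif_neg (Ne.symm h), if_neg h]

theorem basis_mul_idem {i j : V} (p : QPath Q i j) (l : V) :
    ps.basis ⟨i, j, p⟩ * ps.idem l = if l = i then ps.basis ⟨i, j, p⟩ else 0 := by
  rw [idem, ps.basis_mul]
  by_cases h : l = i
  · subst h; rw [dif_pos rfl, if_pos rfl, QPath.cast_rfl, QPath.nil_comp]
  · rw [dif_neg h, if_neg h]

theorem idem_mul_idem (i j : V) :
    ps.idem i * ps.idem j = if i = j then ps.idem i else 0 := by
  show ps.idem i * ps.basis ⟨j, j, QPath.nil j⟩ = _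
  rw [idem_mul_basis]
  split_ifs with h
  · rw [h]; rfl
  · rfl

theorem basis_cons {i j l : V} (p : QPath Q i j) (a : Q.Arrow j l) :
    ps.basis ⟨i, l, p.cons a⟩ = ps.arrow a * ps.basis ⟨i, j, p⟩ := by
  rw [arrow, ps.basis_mul, dif_pos rfl, QPath.cast_rfl, QPath.comp_cons, QPath.comp_nil]

theorem idem_mul_mul_idem_mem_pathSpan (i j : V) (x : A) :
    ps.idem i * x * ps.idem j ∈ ps.pathSpan i j := by
  induction ps.basis.mem_span x using Submodule.span_induction with
  | mem x hx =>
    obtain ⟨⟨a, b, q⟩, rfl⟩ := hx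
    rw [idem_mul_basis]
    split_ifs with h
    · rw [basis_mul_idem]
      split_ifs with h'
      · subst h h'; exact Submodule.subset_span ⟨q, rfl⟩
      · exact zero_mem _
    · rw [zero_mul]; exact zero_mem _
  | zero => rw [mul_zero, zero_mul]; exact zero_mem _
  | add y z _ _ hy hz => rw [mul_add, add_mul]; exact add_mem hy hz
  | smul c y _ hy => rw [mul_smul_comm, smul_mul_assoc]; exact Submodule.smul_mem _ c hy

theorem mem_pathSpan_iff {i j : V} {x : A} :
    x ∈ ps.pathSpan i j ↔ ps.idem i * x * ps.idem j = x := by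
  refine ⟨fun hx => ?_, fun hx => hx ▸ ps.idem_mul_mul_idem_mem_pathSpan i j x⟩
  induction hx using Submodule.span_induction with
  | mem x hx =>
    obtain ⟨p, rfl⟩ := hx
    rw [idem_mul_basis, if_pos rfl, basis_mul_idem, if_pos rfl]
  | zero => rw [mul_zero, zero_mul]
  | add y z _ _ hy hz => rw [mul_add, add_mul, hy, hz]
  | smul c y _ hy => rw [mul_smul_comm, smul_mul_assoc, hy]

theorem arrow_mem_arrowSpan {i j : V} (a : Q.Arrow i j) : ps.arrow a ∈ ps.arrowSpan j i :=
  Submodule.subset_span ⟨a, rfl⟩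

theorem arrowSpan_le_pathSpan (i j : V) : ps.arrowSpan i j ≤ ps.pathSpan i j :=
  Submodule.span_mono fun _ ⟨_, hx⟩ => ⟨_, hx⟩

theorem arrow_mem_pathSpan {i j : V} (a : Q.Arrow i j) : ps.arrow a ∈ ps.pathSpan j i :=
  ps.arrowSpan_le_pathSpan j i (ps.arrow_mem_arrowSpan a)

theorem basis_mem_degreeGE {n : ℕ} {i j : V} (p : QPath Q i j) (h : n ≤ p.length) :
    ps.basis ⟨i, j, p⟩ ∈ ps.degreeGE n :=
  Submodule.subset_span ⟨i, j, p, h, rfl⟩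

theorem degreeGE_anti : Antitone ps.degreeGE := fun _ _ h =>
  Submodule.span_mono fun _ ⟨i, j, p, hp, hx⟩ => ⟨i, j, p, h.trans hp, hx⟩

theorem degreeGE_zero : ps.degreeGE 0 = ⊤ := by
  rw [eq_top_iff, ← ps.basis.span_eq]
  exact Submodule.span_mono fun _ ⟨⟨i, j, p⟩, hx⟩ => ⟨i, j, p, Nat.zero_le _, hx.symm⟩

theorem degreeGE_card_eq_bot (hQ : Q.NoCycles) : ps.degreeGE (Fintype.card V) = ⊥ := by
  rw [degreeGE, Submodule.span_eq_bot]
  rintro _ ⟨i, j, p, hp, rfl⟩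
  exact absurd hp (not_le.2 (QPath.length_lt_card hQ p))

theorem mul_mem_degreeGE {m n : ℕ} {x y : A} (hx : x ∈ ps.degreeGE m)
    (hy : y ∈ ps.degreeGE n) : x * y ∈ ps.degreeGE (m + n) := by
  induction hx using Submodule.span_induction with
  | mem x hx =>
    induction hy using Submodule.span_induction with
    | mem y hy =>
      obtain ⟨i, j, p, hp, rfl⟩ := hx
      obtain ⟨c, d, q, hq, rfl⟩ := hy
      rw [ps.basis_mul]
      split_ifs
      · exact ps.basis_mem_degreeGE _ (by simp only [QPath.length_comp, QPath.length_cast]; omega)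
      · exact zero_mem _
    | zero => rw [mul_zero]; exact zero_mem _
    | add y z _ _ hy hz => rw [mul_add]; exact add_mem hy hz
    | smul c y _ hy => rw [mul_smul_comm]; exact Submodule.smul_mem _ c hy
  | zero => rw [zero_mul]; exact zero_mem _
  | add x y _ _ hx hy => rw [add_mul]; exact add_mem hx hy
  | smul c x _ hx => rw [smul_mul_assoc]; exact Submodule.smul_mem _ c hx

section Lift

variable {B : Type} [Ring B] [Algebra k B] {E : V → B} {F : ∀ i j : V, Q.Arrow i j → B}

theorem constr_eval_one (hsum : ∑ i, E i = 1) :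
    ps.basis.constr k (fun s => s.2.2.eval E F) 1 = 1 := by
  simp only [ps.one_def, map_sum, Module.Basis.constr_basis, QPath.eval_nil, hsum]

theorem constr_eval_mul (hE : ∀ i j, E i * E j = if i = j then E i else 0)
    (hF : ∀ i j (a : Q.Arrow i j), E j * F i j a * E i = F i j a) (x y : A) :
    ps.basis.constr k (fun s => s.2.2.eval E F) (x * y) =
      ps.basis.constr k (fun s => s.2.2.eval E F) x *
        ps.basis.constr k (fun s => s.2.2.eval E F) y := by
  set f := ps.basis.constr k (fun s => s.2.2.eval E F)
  suffices (LinearMap.mul k A).compr₂ f = (LinearMap.mul k B).compl₁₂ f f from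
    LinearMap.congr_fun₂ this x y
  refine ps.basis.ext fun ⟨a, b, p⟩ => ps.basis.ext fun ⟨c, d, q⟩ => ?_
  simp only [LinearMap.compr₂_apply, LinearMap.compl₁₂_apply, LinearMap.mul_apply', f,
    Module.Basis.constr_basis, ps.basis_mul]
  split_ifs with h
  · subst h
    rw [Module.Basis.constr_basis, QPath.cast_rfl, QPath.eval_comp hE hF]
  · rw [map_zero, ← QPath.eval_mul_idem hE p, ← QPath.idem_mul_eval hE hF q, mul_assoc,
      ← mul_assoc (E a), hE, if_neg (Ne.symm h), zero_mul, mul_zero]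

noncomputable def lift (hE : ∀ i j, E i * E j = if i = j then E i else 0)
    (hsum : ∑ i, E i = 1) (hF : ∀ i j (a : Q.Arrow i j), E j * F i j a * E i = F i j a) :
    A →ₐ[k] B :=
  AlgHom.ofLinearMap (ps.basis.constr k fun s => s.2.2.eval E F) (ps.constr_eval_one hsum)
    (ps.constr_eval_mul hE hF)

variable {hE : ∀ i j, E i * E j = if i = j then E i else 0} {hsum : ∑ i, E i = 1}
  {hF : ∀ i j (a : Q.Arrow i j), E j * F i j a * E i = F i j a}

@[simp] theorem lift_idem (i : V) : ps.lift hE hsum hF (ps.idem i) = E i :=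
  ps.basis.constr_basis k _ _

@[simp] theorem lift_arrow {i j : V} (a : Q.Arrow i j) :
    ps.lift hE hsum hF (ps.arrow a) = F i j a :=
  (ps.basis.constr_basis k _ _).trans <| by
    rw [QPath.eval_cons, QPath.eval_nil, ← hF, mul_assoc, hE, if_pos rfl, hF]

theorem algHom_ext {f₁ f₂ : A →ₐ[k] B} (he : ∀ i, f₁ (ps.idem i) = f₂ (ps.idem i))
    (ha : ∀ i j (a : Q.Arrow i j), f₁ (ps.arrow a) = f₂ (ps.arrow a)) : f₁ = f₂ := by
  refine AlgHom.toLinearMap_injective (ps.basis.ext fun ⟨i, j, p⟩ => ?_)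
  induction p with
  | nil => exact he i
  | cons p a ih =>
    simp only [AlgHom.toLinearMap_apply] at ih ⊢
    rw [ps.basis_cons, map_mul, map_mul, ih, ha]

end Lift

section Unipotent

variable {g : A →ₐ[k] A}

theorem sub_basis_mem_degreeGE (he : ∀ i, g (ps.idem i) = ps.idem i)
    (ha : ∀ i j (a : Q.Arrow i j), g (ps.arrow a) - ps.arrow a ∈ ps.degreeGE 2)
    {i j : V} (p : QPath Q i j) :
    g (ps.basis ⟨i, j, p⟩) - ps.basis ⟨i, j, p⟩ ∈ ps.degreeGE (p.length + 1) := by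
  induction p with
  | nil =>
    rw [← idem, he, sub_self]
    exact zero_mem _
  | @cons j l p a ih =>
    have hga : g (ps.arrow a) ∈ ps.degreeGE 1 := by
      rw [← add_sub_cancel (ps.arrow a) (g (ps.arrow a))]
      exact add_mem (ps.basis_mem_degreeGE _ (by simp)) (ps.degreeGE_anti (by omega) (ha j l a))
    have key : g (ps.basis ⟨i, l, p.cons a⟩) - ps.basis ⟨i, l, p.cons a⟩ =
        g (ps.arrow a) * (g (ps.basis ⟨i, j, p⟩) - ps.basis ⟨i, j, p⟩) +
          (g (ps.arrow a) - ps.arrow a) * ps.basis ⟨i, j, p⟩ := by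
      rw [ps.basis_cons, map_mul]
      noncomm_ring
    rw [key, QPath.length_cons]
    have hap := ps.mul_mem_degreeGE (ha j l a) (ps.basis_mem_degreeGE p le_rfl)
    exact add_mem (ps.degreeGE_anti (by omega) (ps.mul_mem_degreeGE hga ih))
      (ps.degreeGE_anti (by omega) hap)

theorem sub_mem_degreeGE_succ (he : ∀ i, g (ps.idem i) = ps.idem i)
    (ha : ∀ i j (a : Q.Arrow i j), g (ps.arrow a) - ps.arrow a ∈ ps.degreeGE 2)
    {n : ℕ} {x : A} (hx : x ∈ ps.degreeGE n) :
    g x - x ∈ ps.degreeGE (n + 1) := by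
  suffices ps.degreeGE n ≤ (ps.degreeGE (n + 1)).comap (g.toLinearMap - LinearMap.id) from
    this hx
  refine Submodule.span_le.2 ?_
  rintro _ ⟨i, j, p, hp, rfl⟩
  exact ps.degreeGE_anti (by omega) (ps.sub_basis_mem_degreeGE he ha p)

/-- `g - 1` raises the path-length filtration, which vanishes in degree `|Q₀|`. -/
theorem isNilpotent_toLinearMap_sub_one (hQ : Q.NoCycles)
    (he : ∀ i, g (ps.idem i) = ps.idem i)
    (ha : ∀ i j (a : Q.Arrow i j), g (ps.arrow a) - ps.arrow a ∈ ps.degreeGE 2) :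
    IsNilpotent (g.toLinearMap - 1) := by
  have hpow : ∀ (n : ℕ) (x : A), ((g.toLinearMap - 1) ^ n) x ∈ ps.degreeGE n := by
    intro n
    induction n with
    | zero => simp [ps.degreeGE_zero]
    | succ n ih =>
      intro x
      rw [pow_succ', Module.End.mul_apply]
      exact ps.sub_mem_degreeGE_succ he ha (ih x)
  refine ⟨Fintype.card V, LinearMap.ext fun x => ?_⟩
  simpa [ps.degreeGE_card_eq_bot hQ] using hpow (Fintype.card V) x

theorem bijective_of_arrow_sub_mem_degreeGE (hQ : Q.NoCycles)
    (he : ∀ i, g (ps.idem i) = ps.idem i)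
    (ha : ∀ i j (a : Q.Arrow i j), g (ps.arrow a) - ps.arrow a ∈ ps.degreeGE 2) :
    Function.Bijective g := by
  have := (ps.isNilpotent_toLinearMap_sub_one hQ he ha).isUnit_one_add
  rw [add_sub_cancel] at this
  exact (Module.End.isUnit_iff _).1 this

end Unipotent

theorem exists_algHom_arrow_eq (F : ∀ i j, Q.Arrow i j → A)
    (hF : ∀ i j (a : Q.Arrow i j), F i j a ∈ ps.pathSpan j i) :
    ∃ G : A →ₐ[k] A, (∀ i, G (ps.idem i) = ps.idem i) ∧
      ∀ i j (a : Q.Arrow i j), G (ps.arrow a) = F i j a :=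
  ⟨ps.lift ps.idem_mul_idem ps.one_def.symm fun i j a => ps.mem_pathSpan_iff.1 (hF i j a),
    ps.lift_idem, fun _ _ => ps.lift_arrow⟩

theorem exists_algEquiv_arrow_eq_add (hQ : Q.NoCycles) (w : ∀ i j, Q.Arrow i j → A)
    (hw : ∀ i j (a : Q.Arrow i j), w i j a ∈ ps.pathSpan j i ⊓ ps.degreeGE 2) :
    ∃ g : A ≃ₐ[k] A, (∀ i, g (ps.idem i) = ps.idem i) ∧
      ∀ i j (a : Q.Arrow i j), g (ps.arrow a) = ps.arrow a + w i j a := by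
  obtain ⟨G, hGe, hGa⟩ := ps.exists_algHom_arrow_eq (fun i j a => ps.arrow a + w i j a)
    fun i j a => add_mem (ps.arrow_mem_pathSpan a) (hw i j a).1
  have hbij : Function.Bijective G := ps.bijective_of_arrow_sub_mem_degreeGE hQ hGe
    fun i j a => by rw [hGa, add_sub_cancel_left]; exact (hw i j a).2
  exact ⟨AlgEquiv.ofBijective G hbij, hGe, hGa⟩

theorem map_mem_pathSpan {g : A →ₐ[k] A} (he : ∀ i, g (ps.idem i) = ps.idem i) {i j : V}
    {x : A} (hx : x ∈ ps.pathSpan i j) : g x ∈ ps.pathSpan i j := by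
  rw [mem_pathSpan_iff] at hx ⊢
  rw [← he i, ← he j, ← map_mul, ← map_mul, hx]

theorem arrowSpan_hom_ext {M : Type*} [AddCommGroup M] [Module k M] {i j : V}
    {f₁ f₂ : ps.arrowSpan j i →ₗ[k] M}
    (h : ∀ a : Q.Arrow i j, f₁ ⟨ps.arrow a, ps.arrow_mem_arrowSpan a⟩ =
      f₂ ⟨ps.arrow a, ps.arrow_mem_arrowSpan a⟩) : f₁ = f₂ :=
  LinearMap.ext_on Submodule.span_span_coe_preimage <| by
    rintro ⟨_, _⟩ ⟨a, rfl⟩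
    exact h a

section Quotient

variable {B : Type} [Ring B] [Algebra k B] {p : A →ₐ[k] B}

theorem exists_algHom_comp_eq (hp : Function.Surjective p) (f : A →ₐ[k] B)
    (hf : ∀ i, f (ps.idem i) = p (ps.idem i)) :
    ∃ G : A →ₐ[k] A, (∀ i, G (ps.idem i) = ps.idem i) ∧ p.comp G = f := by
  obtain ⟨G, hGe, hGa⟩ := ps.exists_algHom_arrow_eq
    (fun i j a => ps.idem j * Function.surjInv hp (f (ps.arrow a)) * ps.idem i)
    fun i j a => ps.idem_mul_mul_idem_mem_pathSpan j i _
  refine ⟨G, hGe, ps.algHom_ext (fun i => by rw [AlgHom.comp_apply, hGe, hf]) fun i j a => ?_⟩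
  rw [AlgHom.comp_apply, hGa, map_mul, map_mul, Function.surjInv_eq hp, ← hf, ← hf, ← map_mul,
    ← map_mul, ps.mem_pathSpan_iff.1 (ps.arrow_mem_pathSpan a)]

theorem bijective_of_comp_eq_self (hQ : Q.NoCycles) (hdeg : ∀ x, p x = 0 → x ∈ ps.degreeGE 2)
    {g : A →ₐ[k] A} (he : ∀ i, g (ps.idem i) = ps.idem i) (hg : p.comp g = p) :
    Function.Bijective g :=
  ps.bijective_of_arrow_sub_mem_degreeGE hQ he fun i j a =>
    hdeg _ (by rw [map_sub, ← AlgHom.comp_apply, hg, sub_self])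

theorem exists_algEquiv_lift (hQ : Q.NoCycles) (hp : Function.Surjective p)
    (hdeg : ∀ x, p x = 0 → x ∈ ps.degreeGE 2) (h : B ≃ₐ[k] B)
    (hh : ∀ i, h (p (ps.idem i)) = p (ps.idem i)) :
    ∃ g : A ≃ₐ[k] A, (∀ i, g (ps.idem i) = ps.idem i) ∧ ∀ x, p (g x) = h (p x) := by
  obtain ⟨G, hGe, hG⟩ := ps.exists_algHom_comp_eq hp ((h : B →ₐ[k] B).comp p) hh
  obtain ⟨G', hG'e, hG'⟩ := ps.exists_algHom_comp_eq hp ((h.symm : B →ₐ[k] B).comp p)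
    fun i => h.symm_apply_eq.2 (hh i).symm
  have hGx : ∀ x, p (G x) = h (p x) := fun x => DFunLike.congr_fun hG x
  have hG'x : ∀ x, p (G' x) = h.symm (p x) := fun x => DFunLike.congr_fun hG' x
  have hG'G : Function.Bijective (G'.comp G) := ps.bijective_of_comp_eq_self hQ hdeg
    (fun i => by simp [hGe, hG'e]) (AlgHom.ext fun x => by simp [hGx, hG'x])
  have hGG' : Function.Bijective (G.comp G') := ps.bijective_of_comp_eq_self hQ hdeg
    (fun i => by simp [hGe, hG'e]) (AlgHom.ext fun x => by simp [hGx, hG'x])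
  exact ⟨AlgEquiv.ofBijective G ⟨hG'G.1.of_comp (f := G'), hGG'.2.of_comp (g := G')⟩,
    hGe, hGx⟩

variable {I : Submodule k A}

theorem comp_eq_self_iff (hker : ∀ x, p x = 0 ↔ x ∈ I) {g : A →ₐ[k] A}
    (he : ∀ i, g (ps.idem i) = ps.idem i) :
    (∀ x, p (g x) = p x) ↔ ∀ i j (a : Q.Arrow i j), g (ps.arrow a) - ps.arrow a ∈ I := by
  refine ⟨fun hg i j a => (hker _).1 (by rw [map_sub, hg, sub_self]), fun ha => ?_⟩
  refine DFunLike.congr_fun (ps.algHom_ext (f₁ := p.comp g) (f₂ := p) (fun i => ?_) ?_)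
  · rw [AlgHom.comp_apply, he]
  · intro i j a
    rw [AlgHom.comp_apply, ← sub_eq_zero, ← map_sub]
    exact (hker _).2 (ha i j a)

theorem sub_mem_inf_pathSpan (hker : ∀ x, p x = 0 ↔ x ∈ I) {g : A →ₐ[k] A}
    (he : ∀ i, g (ps.idem i) = ps.idem i) (hg : ∀ x, p (g x) = p x) {i j : V} {x : A}
    (hx : x ∈ ps.pathSpan i j) : g x - x ∈ I ⊓ ps.pathSpan i j :=
  ⟨(hker _).1 (by rw [map_sub, hg, sub_self]), sub_mem (ps.map_mem_pathSpan he hx) hx⟩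

theorem existsUnique_arrowSpan_sub_eq (hQ : Q.NoCycles) (hIle : I ≤ ps.degreeGE 2)
    (hker : ∀ x, p x = 0 ↔ x ∈ I)
    (φ : ∀ q : {q : V × V // q.1 ≠ q.2},
      ps.arrowSpan q.1.1 q.1.2 →ₗ[k] ↥(I ⊓ ps.pathSpan q.1.1 q.1.2)) :
    ∃! g : A ≃ₐ[k] A, (∀ i, g (ps.idem i) = ps.idem i) ∧ I.map g.toLinearMap = I ∧
      (∀ x, p (g x) = p x) ∧
      ∀ (q : {q : V × V // q.1 ≠ q.2}) (v : ps.arrowSpan q.1.1 q.1.2),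
        g (v : A) - (v : A) = (φ q v : A) := by
  let w : ∀ i j, Q.Arrow i j → A := fun i j a =>
    φ ⟨(j, i), hQ.ne a⟩ ⟨ps.arrow a, ps.arrow_mem_arrowSpan a⟩
  have hw : ∀ i j (a : Q.Arrow i j), w i j a ∈ I ⊓ ps.pathSpan j i := fun i j a =>
    (φ ⟨(j, i), hQ.ne a⟩ ⟨ps.arrow a, ps.arrow_mem_arrowSpan a⟩).2
  obtain ⟨g, hge, hga⟩ := ps.exists_algEquiv_arrow_eq_add hQ w fun i j a =>
    ⟨(hw i j a).2, hIle (hw i j a).1⟩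
  have hgp : ∀ x, p (g x) = p x := (ps.comp_eq_self_iff hker (g := g) hge).2 fun i j a => by
    show g (ps.arrow a) - ps.arrow a ∈ I
    rw [hga, add_sub_cancel_left]
    exact (hw i j a).1
  have hgφ : ∀ (q : {q : V × V // q.1 ≠ q.2}) (v : ps.arrowSpan q.1.1 q.1.2),
      g (v : A) - (v : A) = (φ q v : A) := by
    rintro ⟨⟨i, j⟩, hij⟩ v
    refine LinearMap.congr_fun (ps.arrowSpan_hom_ext
      (f₁ := (g.toLinearMap - LinearMap.id) ∘ₗ Submodule.subtype _)
      (f₂ := Submodule.subtype _ ∘ₗ φ ⟨(i, j), hij⟩) fun a => ?_) v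
    show g (ps.arrow a) - ps.arrow a = _
    rw [hga, add_sub_cancel_left]
    rfl
  refine ⟨g, ⟨hge, Submodule.map_algEquiv_eq_self hker g AlgEquiv.refl hgp, hgp, hgφ⟩, ?_⟩
  rintro g' ⟨hg'e, -, -, hg'φ⟩
  refine AlgEquiv.coe_toAlgHom_injective (ps.algHom_ext (fun i => ?_) fun i j a => ?_)
  · exact (hg'e i).trans (hge i).symm
  · have hq := hQ.ne a
    exact sub_left_inj.1 ((hg'φ ⟨(j, i), hq⟩ ⟨_, ps.arrow_mem_arrowSpan a⟩).trans
      (hgφ ⟨(j, i), hq⟩ ⟨_, ps.arrow_mem_arrowSpan a⟩).symm)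

end Quotient

end PathAlgStructure

theorem stabilizer_exact_sequence_general (k : Type) [Field k]
    (V : Type) [Fintype V] [DecidableEq V] (Q : FinQuiver V)
    (A : Type) [Ring A] [Algebra k A] (ps : PathAlgStructure k Q A)
    (hQ : Q.NoCycles)
    (I : Submodule k A)
    (hIle : I ≤ ps.degreeGE 2)
    (B : Type) [Ring B] [Algebra k B] (p : A →ₐ[k] B)
    (hp : Function.Surjective p) (hker : ∀ x : A, p x = 0 ↔ x ∈ I) :
    -- (1) surjectivity onto the automorphisms of the quotient
    (∀ h : B ≃ₐ[k] B, (∀ i : V, h (p (ps.idem i)) = p (ps.idem i)) →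
      ∃ g : A ≃ₐ[k] A, (∀ i : V, g (ps.idem i) = ps.idem i) ∧
        Submodule.map g.toLinearMap I = I ∧ ∀ x : A, p (g x) = h (p x)) ∧
    -- (2) characterization of the kernel
    (∀ g : A ≃ₐ[k] A, (∀ i : V, g (ps.idem i) = ps.idem i) →
      Submodule.map g.toLinearMap I = I →
      ((∀ x : A, p (g x) = p x) ↔
        ∀ (i j : V) (a : Q.Arrow i j),
          g (ps.basis ⟨i, j, (QPath.nil i).cons a⟩) - ps.basis ⟨i, j, (QPath.nil i).cons a⟩ ∈ I)) ∧
    -- (3a) elements of the kernel move arrows by elements of `e_i I e_j`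
    (∀ g : A ≃ₐ[k] A, (∀ i : V, g (ps.idem i) = ps.idem i) →
      Submodule.map g.toLinearMap I = I → (∀ x : A, p (g x) = p x) →
      ∀ (q : {q : V × V // q.1 ≠ q.2}) (v : ps.arrowSpan q.1.1 q.1.2),
        g (v : A) - (v : A) ∈ I ⊓ ps.pathSpan q.1.1 q.1.2) ∧
    -- (3b) the kernel is in bijection with `∏_{i≠j} Hom(V_{ij}^{prim}, e_i I e_j)`
    (∀ φ : ∀ q : {q : V × V // q.1 ≠ q.2},
        (↥(ps.arrowSpan q.1.1 q.1.2) →ₗ[k] ↥(I ⊓ ps.pathSpan q.1.1 q.1.2)),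
      ∃! g : A ≃ₐ[k] A, (∀ i : V, g (ps.idem i) = ps.idem i) ∧
        Submodule.map g.toLinearMap I = I ∧ (∀ x : A, p (g x) = p x) ∧
        ∀ (q : {q : V × V // q.1 ≠ q.2}) (v : ps.arrowSpan q.1.1 q.1.2),
          g (v : A) - (v : A) = (φ q v : A)) := by
  have hdeg : ∀ x, p x = 0 → x ∈ ps.degreeGE 2 := fun x hx => hIle ((hker x).1 hx)
  refine ⟨fun h hh => ?_, fun g hge _ => ps.comp_eq_self_iff hker (g := g) hge,
    fun g hge _ hgp q v => ps.sub_mem_inf_pathSpan hker (g := g) hge hgp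
      (ps.arrowSpan_le_pathSpan _ _ v.2),
    ps.existsUnique_arrowSpan_sub_eq hQ hIle hker⟩
  obtain ⟨g, hge, hgp⟩ := ps.exists_algEquiv_lift hQ hp hdeg h hh
  exact ⟨g, hge, Submodule.map_algEquiv_eq_self hker g h hgp, hgp⟩

/-- For a finite quiver `Q` without oriented cycles and a two-sided ideal
`I ⊆ (kQ)_{≥2}`, with the quotient `kQ/I` presented by a surjective `k`-algebra map
`p : kQ → B` with kernel `I`:

1. the natural map from `Stab_I ⊆ Aut(kQ/k^{Q₀})` (the `k^{Q₀}`-algebra automorphisms `g`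
   of `kQ` with `g(I) = I`) to `Aut((kQ/I)/k^{Q₀})` is surjective: every `k^{Q₀}`-algebra
   automorphism of `kQ/I` lifts;
2. its kernel consists exactly of the `g ∈ Stab_I` with `g(a) − a ∈ I` for every arrow `a`;
3. every `g` in this kernel satisfies `g(v) − v ∈ e_i I e_j` for `v ∈ V_{ij}^{prim}`, and the
   map `g ↦ (v ↦ g(v) − v)` is a bijection from the kernel onto
   `∏_{i≠j} Hom_k(V_{ij}^{prim}, e_i I e_j)`.

Together these express the short exact sequence
`1 → ∏ Hom(V_{ij}^{prim}, e_i I e_j) → Stab_I → Aut((kQ/I)/k^{Q₀}) → 1`. -/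
theorem stabilizer_exact_sequence (k : Type) [Field k]
    (V : Type) [Fintype V] [DecidableEq V] (Q : FinQuiver V)
    (A : Type) [Ring A] [Algebra k A] (ps : PathAlgStructure k Q A)
    (hQ : Q.NoCycles)
    (I : Submodule k A)
    (hI : ∀ a : A, ∀ x ∈ I, a * x ∈ I ∧ x * a ∈ I)
    (hIle : I ≤ ps.degreeGE 2)
    (B : Type) [Ring B] [Algebra k B] (p : A →ₐ[k] B)
    (hp : Function.Surjective p) (hker : ∀ x : A, p x = 0 ↔ x ∈ I) :
    -- (1) surjectivity onto the automorphisms of the quotient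
    (∀ h : B ≃ₐ[k] B, (∀ i : V, h (p (ps.idem i)) = p (ps.idem i)) →
      ∃ g : A ≃ₐ[k] A, (∀ i : V, g (ps.idem i) = ps.idem i) ∧
        Submodule.map g.toLinearMap I = I ∧ ∀ x : A, p (g x) = h (p x)) ∧
    -- (2) characterization of the kernel
    (∀ g : A ≃ₐ[k] A, (∀ i : V, g (ps.idem i) = ps.idem i) →
      Submodule.map g.toLinearMap I = I →
      ((∀ x : A, p (g x) = p x) ↔
        ∀ (i j : V) (a : Q.Arrow i j),
          g (ps.basis ⟨i, j, (QPath.nil i).cons a⟩) - ps.basis ⟨i, j, (QPath.nil i).cons a⟩ ∈ I)) ∧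
    -- (3a) elements of the kernel move arrows by elements of `e_i I e_j`
    (∀ g : A ≃ₐ[k] A, (∀ i : V, g (ps.idem i) = ps.idem i) →
      Submodule.map g.toLinearMap I = I → (∀ x : A, p (g x) = p x) →
      ∀ (q : {q : V × V // q.1 ≠ q.2}) (v : ps.arrowSpan q.1.1 q.1.2),
        g (v : A) - (v : A) ∈ I ⊓ ps.pathSpan q.1.1 q.1.2) ∧
    -- (3b) the kernel is in bijection with `∏_{i≠j} Hom(V_{ij}^{prim}, e_i I e_j)`
    (∀ φ : ∀ q : {q : V × V // q.1 ≠ q.2},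
        (↥(ps.arrowSpan q.1.1 q.1.2) →ₗ[k] ↥(I ⊓ ps.pathSpan q.1.1 q.1.2)),
      ∃! g : A ≃ₐ[k] A, (∀ i : V, g (ps.idem i) = ps.idem i) ∧
        Submodule.map g.toLinearMap I = I ∧ (∀ x : A, p (g x) = p x) ∧
        ∀ (q : {q : V × V // q.1 ≠ q.2}) (v : ps.arrowSpan q.1.1 q.1.2),
          g (v : A) - (v : A) = (φ q v : A)) :=
  stabilizer_exact_sequence_general k V Q A ps hQ I hIle B p hp hker
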